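/- Let ρ : (0,1] → ℝ be a nonnegative measurable function such that r ↦ r⁴ρ(r) is integrable on (0,1) and satisfies the second-moment normalization ∫₀¹ r⁴ρ(r) dr = 3/(2π). Then for every δ > 0 and every k ∈ ℤ³ \ {0}, the 3D nonlocal Fourier symbol satisfies the lower bound λ_δ(k) ≥ |k|² − (δ² |k|⁴)/20. -/

import Mathlib

/-!
The radial integral `∫₀¹ r² ρ(r) (1 - cos (r a)) dr` is bounded below by
`(a²/2 - a⁴/24) ∫₀¹ r⁴ ρ(r) dr`: apply the Taylor bound `1 - cos x ≥ x²/2 - x⁴/24` (from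
`sin y ≥ y - y³/6` at `y = x/2`) and then `r⁶ ≤ r⁴` on `[0, 1]`. With `a = δ|k| cos θ` the
substitution `u = cos θ` turns the angular integral of the lower bound into
`∫₀¹ ((bu)²/2 - (bu)⁴/24) du = b²/6 - b⁴/120`, `b = δ|k|`, and the moment normalization
`3/(2π)` makes the prefactor `4π/δ²` produce exactly `|k|² - δ²|k|⁴/20`.
-/

open Real MeasureTheory

/-- Euclidean norm of a nonzero integer vector `k ∈ ℤ³`. -/
noncomputable def knorm3 (k : ℤ × ℤ × ℤ) : ℝ :=
  Real.sqrt ((k.1 : ℝ) ^ 2 + (k.2.1 : ℝ) ^ 2 + (k.2.2 : ℝ) ^ 2)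

/-- The 3D Fourier symbol of the nonlocal diffusion operator:
`λ_δ(k) = (4π/δ²) ∫₀^{π/2} sin θ ∫₀¹ r² ρ(r) (1 − cos(r δ |k| cos θ)) dr dθ`. -/
noncomputable def lambdaDelta3 (ρ : ℝ → ℝ) (δ κ : ℝ) : ℝ :=
  (4 * π / δ ^ 2) * ∫ θ in (0:ℝ)..(π / 2), Real.sin θ *
    ∫ r in (0:ℝ)..1, r ^ 2 * ρ r * (1 - Real.cos (r * δ * κ * Real.cos θ))

theorem cos_le_one_sub_sq_div_two_add_pow_four_div (x : ℝ) :
    cos x ≤ 1 - x ^ 2 / 2 + x ^ 4 / 24 := by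
  wlog hx : 0 ≤ x with H
  · have := H (-x) (by linarith)
    rwa [cos_neg, neg_sq, show (-x) ^ 4 = x ^ 4 by ring] at this
  have hy : 0 ≤ x / 2 := by positivity
  have half_angle : cos x = 1 - 2 * sin (x / 2) ^ 2 := by
    rw [← cos_two_mul_eq_one_sub, mul_div_cancel₀ x two_ne_zero]
  rcases le_or_gt ((x / 2) ^ 2) 3 with hsmall | hlarge
  · have hsin := sin_ge_sub_cube hy
    have hpos : 0 ≤ x / 2 - (x / 2) ^ 3 / 6 := by nlinarith
    nlinarith [pow_le_pow_left₀ hpos hsin 2, pow_nonneg hy 6]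
  · nlinarith [neg_one_le_cos x]

theorem integral_sin_mul_comp_cos {f : ℝ → ℝ} (hf : Continuous f) :
    ∫ θ in (0 : ℝ)..(π / 2), sin θ * f (cos θ) = ∫ u in (0 : ℝ)..1, f u := by
  have := intervalIntegral.integral_comp_mul_deriv (a := 0) (b := π / 2)
    (fun θ _ => hasDerivAt_cos θ) continuous_sin.neg.continuousOn hf
  simp only [Function.comp_apply, mul_neg, intervalIntegral.integral_neg, cos_zero,
    cos_pi_div_two] at this
  rw [intervalIntegral.integral_symm (1 : ℝ) 0, ← this, neg_neg]
  simp only [mul_comm]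

theorem integral_taylor_one_sub_cos (b : ℝ) :
    ∫ u in (0 : ℝ)..1, ((b * u) ^ 2 / 2 - (b * u) ^ 4 / 24) = b ^ 2 / 6 - b ^ 4 / 120 := by
  rw [intervalIntegral.integral_sub (by apply Continuous.intervalIntegrable; fun_prop)
    (by apply Continuous.intervalIntegrable; fun_prop)]
  simp [mul_pow, intervalIntegral.integral_div, intervalIntegral.integral_const_mul]
  ring

theorem pow_four_mul_le_sq_mul_one_sub_cos {r : ℝ} (hr₀ : 0 ≤ r) (hr₁ : r ≤ 1) (a : ℝ) :
    r ^ 4 * (a ^ 2 / 2 - a ^ 4 / 24) ≤ r ^ 2 * (1 - cos (r * a)) := by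
  have hcos := cos_le_one_sub_sq_div_two_add_pow_four_div (r * a)
  have hr : r ^ 6 ≤ r ^ 4 := pow_le_pow_of_le_one hr₀ hr₁ (by norm_num)
  nlinarith [mul_le_mul_of_nonneg_right hr (pow_nonneg (sq_nonneg a) 2), sq_nonneg r]

theorem sq_mul_one_sub_cos_le (r a : ℝ) : r ^ 2 * (1 - cos (r * a)) ≤ a ^ 2 / 2 * r ^ 4 := by
  nlinarith [one_sub_sq_div_two_le_cos (x := r * a), sq_nonneg r]

noncomputable def radialIntegral (ρ : ℝ → ℝ) (a : ℝ) : ℝ :=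
  ∫ r in (0 : ℝ)..1, r ^ 2 * ρ r * (1 - cos (r * a))

section Radial

variable {ρ : ℝ → ℝ}

theorem norm_radialIntegrand_le {r : ℝ} (hρ : 0 ≤ ρ r) (a : ℝ) :
    ‖r ^ 2 * ρ r * (1 - cos (r * a))‖ ≤ a ^ 2 / 2 * (r ^ 4 * ρ r) := by
  have hcos : 0 ≤ 1 - cos (r * a) := sub_nonneg.mpr (cos_le_one _)
  rw [Real.norm_of_nonneg (by positivity)]
  nlinarith [mul_le_mul_of_nonneg_left (sq_mul_one_sub_cos_le r a) hρ]

theorem intervalIntegrable_radialIntegrand (hmeas : Measurable ρ)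
    (hnonneg : ∀ r ∈ Set.Ioc (0 : ℝ) 1, 0 ≤ ρ r)
    (hint : IntervalIntegrable (fun r => r ^ 4 * ρ r) volume 0 1) (a : ℝ) :
    IntervalIntegrable (fun r => r ^ 2 * ρ r * (1 - cos (r * a))) volume 0 1 := by
  refine (hint.const_mul (a ^ 2 / 2)).mono_fun (by fun_prop) ?_
  rw [Set.uIoc_of_le zero_le_one]
  filter_upwards [ae_restrict_mem measurableSet_Ioc] with r hr
  exact (norm_radialIntegrand_le (hnonneg r hr) a).trans (le_abs_self _)

theorem continuous_radialIntegral (hmeas : Measurable ρ)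
    (hnonneg : ∀ r ∈ Set.Ioc (0 : ℝ) 1, 0 ≤ ρ r)
    (hint : IntervalIntegrable (fun r => r ^ 4 * ρ r) volume 0 1) :
    Continuous (radialIntegral ρ) := by
  refine continuous_iff_continuousAt.mpr fun a₀ => ?_
  refine intervalIntegral.continuousAt_of_dominated_interval
    (bound := fun r => (|a₀| + 1) ^ 2 / 2 * (r ^ 4 * ρ r))
    (Filter.Eventually.of_forall fun a => by fun_prop) ?_ (hint.const_mul _)
    (Filter.Eventually.of_forall fun r _ => by fun_prop)
  filter_upwards [Metric.ball_mem_nhds a₀ one_pos] with a ha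
  refine Filter.Eventually.of_forall fun r hr => ?_
  rw [Set.uIoc_of_le zero_le_one] at hr
  have hρ := hnonneg r hr
  have ha' : a ^ 2 ≤ (|a₀| + 1) ^ 2 := by
    rw [Metric.mem_ball, Real.dist_eq] at ha
    have : |a| ≤ |a₀| + 1 := by linarith [abs_sub_abs_le_abs_sub a a₀]
    simpa only [sq_abs] using pow_le_pow_left₀ (abs_nonneg a) this 2
  exact (norm_radialIntegrand_le hρ a).trans
    (mul_le_mul_of_nonneg_right (by linarith) (by positivity))

theorem moment_mul_le_radialIntegral (hmeas : Measurable ρ)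
    (hnonneg : ∀ r ∈ Set.Ioc (0 : ℝ) 1, 0 ≤ ρ r)
    (hint : IntervalIntegrable (fun r => r ^ 4 * ρ r) volume 0 1) (a : ℝ) :
    (a ^ 2 / 2 - a ^ 4 / 24) * ∫ r in (0 : ℝ)..1, r ^ 4 * ρ r ≤ radialIntegral ρ a := by
  rw [← intervalIntegral.integral_const_mul]
  refine intervalIntegral.integral_mono_on zero_le_one (hint.const_mul _)
    (intervalIntegrable_radialIntegrand hmeas hnonneg hint a) fun r hr => ?_
  rcases hr.1.eq_or_lt with rfl | hr₀
  · simp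
  have key := mul_le_mul_of_nonneg_right (pow_four_mul_le_sq_mul_one_sub_cos hr₀.le hr.2 a)
    (hnonneg r ⟨hr₀, hr.2⟩)
  linarith

end Radial

theorem lambdaDelta3_eq (ρ : ℝ → ℝ) (δ κ : ℝ) :
    lambdaDelta3 ρ δ κ =
      4 * π / δ ^ 2 * ∫ θ in (0 : ℝ)..(π / 2), sin θ * radialIntegral ρ (δ * κ * cos θ) := by
  simp only [lambdaDelta3, radialIntegral, mul_assoc]

theorem lambdaDelta3_lower_bound_general (ρ : ℝ → ℝ) (hmeas : Measurable ρ)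
    (hnonneg : ∀ r ∈ Set.Ioc (0:ℝ) 1, 0 ≤ ρ r)
    (hint : IntervalIntegrable (fun r => r ^ 4 * ρ r) volume 0 1)
    (hmoment : (∫ r in (0:ℝ)..1, r ^ 4 * ρ r) = 3 / (2 * π))
    (δ : ℝ) (hδ : 0 < δ) (k : ℤ × ℤ × ℤ) :
    (knorm3 k) ^ 2 - δ ^ 2 * (knorm3 k) ^ 4 / 20 ≤ lambdaDelta3 ρ δ (knorm3 k) := by
  set b := δ * knorm3 k
  have hcont := continuous_radialIntegral hmeas hnonneg hint
  calc knorm3 k ^ 2 - δ ^ 2 * knorm3 k ^ 4 / 20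
      = 4 * π / δ ^ 2 * ∫ θ in (0 : ℝ)..(π / 2),
          sin θ * (((b * cos θ) ^ 2 / 2 - (b * cos θ) ^ 4 / 24) *
            ∫ r in (0 : ℝ)..1, r ^ 4 * ρ r) := by
        rw [integral_sin_mul_comp_cos (f := fun u => ((b * u) ^ 2 / 2 - (b * u) ^ 4 / 24) * _)
          (by fun_prop), intervalIntegral.integral_mul_const, integral_taylor_one_sub_cos, hmoment]
        field_simp
        ring
    _ ≤ 4 * π / δ ^ 2 * ∫ θ in (0 : ℝ)..(π / 2), sin θ * radialIntegral ρ (b * cos θ) := by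
        gcongr
        refine intervalIntegral.integral_mono_on (by positivity) (by
          apply Continuous.intervalIntegrable; fun_prop) (by
          apply Continuous.intervalIntegrable; fun_prop) fun θ hθ => ?_
        exact mul_le_mul_of_nonneg_left (moment_mul_le_radialIntegral hmeas hnonneg hint _)
          (sin_nonneg_of_nonneg_of_le_pi hθ.1 (by linarith [hθ.2, pi_pos]))
    _ = lambdaDelta3 ρ δ (knorm3 k) := (lambdaDelta3_eq ρ δ _).symm

theorem lambdaDelta3_lower_bound (ρ : ℝ → ℝ) (hmeas : Measurable ρ)
    (hnonneg : ∀ r ∈ Set.Ioc (0:ℝ) 1, 0 ≤ ρ r)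
    (hint : IntervalIntegrable (fun r => r ^ 4 * ρ r) volume 0 1)
    (hmoment : (∫ r in (0:ℝ)..1, r ^ 4 * ρ r) = 3 / (2 * π))
    (δ : ℝ) (hδ : 0 < δ) (k : ℤ × ℤ × ℤ) (hk : k ≠ 0) :
    (knorm3 k) ^ 2 - δ ^ 2 * (knorm3 k) ^ 4 / 20 ≤ lambdaDelta3 ρ δ (knorm3 k) :=
  lambdaDelta3_lower_bound_general ρ hmeas hnonneg hint hmoment δ hδ k
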